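/- arXiv:1902.03301 — 11 statements merged into one kernel-verified Lean document; each statement's English description precedes it below -/
import Mathlib

section
/- For every real number c with 0 < c < 1, the function f(x) = Real.sin x / Real.sin (c * x) is strictly decreasing on the interval (0, π/2]; that is, for all real x, y with 0 < x, x < y and y ≤ π/2, one has sin y / sin (c*y) < sin x / sin (c*x). -/
open Real

/-!
The tangent is strictly convex on `[0, π/2)` and vanishes at `0`, so `tan (c x) < c tan x`.
Multiplied by `cos x cos (c x) > 0` this says that the numerator
`cos x sin (c x) - c sin x cos (c x)` of the derivative of `sin x / sin (c x)` is negative.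
-/

open Set

theorem Real.strictConvexOn_tan : StrictConvexOn ℝ (Ico 0 (π / 2)) tan := by
  have hcos_pos {x : ℝ} (hx : x ∈ Ico 0 (π / 2)) : 0 < cos x :=
    cos_pos_of_mem_Ioo ⟨by linarith [pi_pos, hx.1], hx.2⟩
  refine StrictMonoOn.strictConvexOn_of_deriv (convex_Ico 0 (π / 2))
    (fun x hx ↦ (continuousAt_tan.2 (hcos_pos hx).ne').continuousWithinAt) ?_
  rw [interior_Ico]
  intro x hx y hy hxy
  have hcos : cos y < cos x :=
    cos_lt_cos_of_nonneg_of_le_pi_div_two hx.1.le hy.2.le hxy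
  simp only [deriv_tan]
  exact one_div_lt_one_div_of_lt (pow_pos (hcos_pos (Ioo_subset_Ico_self hy)) 2)
    (pow_lt_pow_left₀ hcos (hcos_pos (Ioo_subset_Ico_self hy)).le two_ne_zero)

theorem Real.tan_mul_lt_mul_tan {c x : ℝ} (hc0 : 0 < c) (hc1 : c < 1) (hx0 : 0 < x)
    (hx : x < π / 2) : tan (c * x) < c * tan x := by
  have := strictConvexOn_tan.2 ⟨hx0.le, hx⟩ ⟨le_rfl, by positivity⟩ hx0.ne' hc0
    (sub_pos.2 hc1) (add_sub_cancel c 1)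
  simpa using this

theorem Real.cos_mul_sin_mul_lt {c x : ℝ} (hc0 : 0 < c) (hc1 : c < 1) (hx0 : 0 < x)
    (hx : x < π / 2) : cos x * sin (c * x) < c * sin x * cos (c * x) := by
  have hcx : c * x < x := by nlinarith
  have hcos : 0 < cos x := cos_pos_of_mem_Ioo ⟨by linarith [pi_pos], hx⟩
  have hcos' : 0 < cos (c * x) := cos_pos_of_mem_Ioo ⟨by nlinarith [pi_pos], hcx.trans hx⟩
  have := tan_mul_lt_mul_tan hc0 hc1 hx0 hx
  rw [tan_eq_sin_div_cos, tan_eq_sin_div_cos, div_lt_iff₀ hcos', mul_div_assoc',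
    div_mul_eq_mul_div, lt_div_iff₀ hcos] at this
  linarith

theorem Real.strictAntiOn_sin_div_sin_mul {c : ℝ} (hc0 : 0 < c) (hc1 : c < 1) :
    StrictAntiOn (fun x ↦ sin x / sin (c * x)) (Ioc 0 (π / 2)) := by
  have hsin_pos {x : ℝ} (hx : x ∈ Ioc 0 (π / 2)) : 0 < sin (c * x) :=
    sin_pos_of_pos_of_lt_pi (mul_pos hc0 hx.1) (by nlinarith [pi_pos, hx.2])
  refine strictAntiOn_of_deriv_neg (convex_Ioc 0 (π / 2)) ?_ ?_
  · exact continuous_sin.continuousOn.div (by fun_prop) fun x hx ↦ (hsin_pos hx).ne'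
  · rw [interior_Ioc]
    intro x hx
    have hderiv : HasDerivAt (fun x ↦ sin x / sin (c * x))
        ((cos x * sin (c * x) - sin x * (cos (c * x) * c)) / sin (c * x) ^ 2) x :=
      (hasDerivAt_sin x).div ((hasDerivAt_sin (c * x)).comp x (hasDerivAt_const_mul c))
        (hsin_pos (Ioo_subset_Ioc_self hx)).ne'
    rw [hderiv.deriv]
    refine div_neg_of_neg_of_pos ?_ (pow_pos (hsin_pos (Ioo_subset_Ioc_self hx)) 2)
    linarith [cos_mul_sin_mul_lt hc0 hc1 hx.1 hx.2]

theorem ibn_alhaytham_lemma (c : ℝ) (hc0 : 0 < c) (hc1 : c < 1)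
    (x y : ℝ) (hx : 0 < x) (hxy : x < y) (hy : y ≤ π / 2) :
    Real.sin y / Real.sin (c * y) < Real.sin x / Real.sin (c * x) :=
  strictAntiOn_sin_div_sin_mul hc0 hc1 ⟨hx, hxy.le.trans hy⟩ ⟨hx.trans hxy, hy⟩ hxy
end

section
/- Let a < b be real numbers and let f : ℝ → ℝ be continuous on the open interval (a, b). Suppose f is locally decreasing to the left at every point of (a, b), i.e. for every y ∈ (a, b) there exists η > 0 such that f(x) > f(y) for all x ∈ (y − η, y) ∩ (a, b). Then f is strictly decreasing on (a, b): for all x, y ∈ (a, b) with x < y, f(x) > f(y). -/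
/-! On `[x, y]` the continuous `f` attains its maximum at some `q`. If `x < q`, the points just
left of `q` would have larger values, so the maximum sits at `x`. Since `f` takes a value larger
than `f y` just left of `y`, `f x > f y`. -/

open Set Filter Topology

section

variable {α β : Type*} [LinearOrder α] [TopologicalSpace α] [OrderTopology α]
  [DenselyOrdered α]

lemma Filter.Eventually.exists_mem_Ioo_of_nhdsLT {p : α → Prop} {a b : α}
    (h : ∀ᶠ z in 𝓝[<] b, p z) (hab : a < b) : ∃ z ∈ Ioo a b, p z := by
  have := nhdsLT_neBot_of_exists_lt ⟨a, hab⟩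
  exact (eventually_mem_set.2 (Ioo_mem_nhdsLT hab)).and h |>.exists

lemma IsMaxOn.eq_left_of_eventually_nhdsLT [Preorder β] {f : α → β} {x y q : α}
    (hmax : IsMaxOn f (Icc x y) q) (hq : q ∈ Icc x y) (hloc : ∀ᶠ z in 𝓝[<] q, f q < f z) :
    q = x := by
  by_contra hqx
  obtain ⟨z, hz, hfz⟩ := hloc.exists_mem_Ioo_of_nhdsLT (lt_of_le_of_ne hq.1 (Ne.symm hqx))
  exact (hmax ⟨hz.1.le, hz.2.le.trans hq.2⟩).not_gt hfz

theorem strictAntiOn_of_eventually_nhdsLT [CompactIccSpace α] [LinearOrder β]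
    [TopologicalSpace β] [ClosedIciTopology β] {f : α → β} {s : Set α} (hs : s.OrdConnected)
    (hcont : ContinuousOn f s) (hloc : ∀ y ∈ s, ∀ᶠ z in 𝓝[<] y, f y < f z) :
    StrictAntiOn f s := by
  intro x hx y hy hxy
  have hsub : Icc x y ⊆ s := hs.out hx hy
  obtain ⟨q, hq, hmax⟩ :=
    isCompact_Icc.exists_isMaxOn (nonempty_Icc.2 hxy.le) (hcont.mono hsub)
  obtain rfl : q = x := hmax.eq_left_of_eventually_nhdsLT hq (hloc q (hsub hq))
  obtain ⟨z, hz, hfz⟩ := (hloc y hy).exists_mem_Ioo_of_nhdsLT hxy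
  exact hfz.trans_le (hmax ⟨hz.1.le, hz.2.le⟩)

end

theorem locally_decreasing_left_implies_strict_anti_general
    (a b : ℝ) (f : ℝ → ℝ)
    (hcont : ContinuousOn f (Set.Ioo a b))
    (hloc : ∀ y ∈ Set.Ioo a b, ∃ η > 0,
      ∀ x ∈ Set.Ioo a b, y - η < x → x < y → f x > f y) :
    ∀ x ∈ Set.Ioo a b, ∀ y ∈ Set.Ioo a b, x < y → f x > f y := by
  have hloc' : ∀ y ∈ Ioo a b, ∀ᶠ z in 𝓝[<] y, f y < f z := by
    intro y hy
    obtain ⟨η, hη, hdec⟩ := hloc y hy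
    filter_upwards [Ioo_mem_nhdsLT (sub_lt_self y hη),
      mem_nhdsWithin_of_mem_nhds (Ioo_mem_nhds hy.1 hy.2)] with z hz hzab
    exact hdec z hzab hz.1 hz.2
  intro x hx y hy hxy
  exact strictAntiOn_of_eventually_nhdsLT ordConnected_Ioo hcont hloc' hx hy hxy

theorem locally_decreasing_left_implies_strict_anti
    (a b : ℝ) (hab : a < b) (f : ℝ → ℝ)
    (hcont : ContinuousOn f (Set.Ioo a b))
    (hloc : ∀ y ∈ Set.Ioo a b, ∃ η > 0,
      ∀ x ∈ Set.Ioo a b, y - η < x → x < y → f x > f y) :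
    ∀ x ∈ Set.Ioo a b, ∀ y ∈ Set.Ioo a b, x < y → f x > f y :=
  locally_decreasing_left_implies_strict_anti_general a b f hcont hloc
end

section
/- Let p, q, a, b be real numbers with sin(b−q) ≠ 0, sin(b−p) ≠ 0, sin(p−q) ≠ 0 and cos a ≠ 0. If sin(a+q)/sin(b−q) = sin(a−p)/sin(b−p), then sin(p+q)/sin(p−q) = 1 − (sin(b−a)·cos p)/(sin(b−p)·cos a). -/
/-!
Writing `sin (a + q) = sin (a - q) + 2 cos a sin q`, the hypothesis becomes, after Ptolemy's
identity for sines, `sin (b - a) sin (p - q) = -2 cos a sin q sin (b - p)`. Likewise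
`sin (p + q) = sin (p - q) + 2 cos p sin q`, and the conclusion is the same relation
multiplied by `cos p`.
-/

open Real

theorem Real.sin_add_sub_sin_sub (x y : ℝ) : sin (x + y) - sin (x - y) = 2 * cos x * sin y := by
  rw [sin_add, sin_sub]
  ring

theorem Real.sin_ptolemy (w x y z : ℝ) :
    sin (x - w) * sin (y - z) - sin (x - z) * sin (y - w) = sin (y - x) * sin (z - w) := by
  simp only [sin_sub]
  ring

theorem trigonometric_lemma (p q a b : ℝ)
    (h1 : Real.sin (b - q) ≠ 0) (h2 : Real.sin (b - p) ≠ 0)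
    (h3 : Real.sin (p - q) ≠ 0) (h4 : Real.cos a ≠ 0)
    (h : Real.sin (a + q) / Real.sin (b - q) = Real.sin (a - p) / Real.sin (b - p)) :
    Real.sin (p + q) / Real.sin (p - q)
      = 1 - Real.sin (b - a) * Real.cos p / (Real.sin (b - p) * Real.cos a) := by
  have hcross : sin (a + q) * sin (b - p) = sin (a - p) * sin (b - q) :=
    (div_eq_div_iff h1 h2).1 h
  have hrel : sin (b - a) * sin (p - q) = -(2 * cos a * sin q * sin (b - p)) := by
    linear_combination hcross - sin (b - p) * sin_add_sub_sin_sub a q - sin_ptolemy q a b p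
  rw [eq_sub_iff_add_eq, div_add_div _ _ h3 (mul_ne_zero h2 h4), div_eq_one_iff_eq
    (mul_ne_zero h3 (mul_ne_zero h2 h4))]
  linear_combination sin (b - p) * cos a * sin_add_sub_sin_sub p q + cos p * hrel
end

section
/- Let k be a real number with 0 < k < 1, and let θ, Θ be real numbers with 0 < θ ≤ Θ ≤ π/2. Then k < sin(k·θ)/sin θ and sin(k·θ)/sin θ ≤ sin(k·Θ)/sin Θ. -/
/-!
Strict concavity of `sin` on `[0, π]` gives `sin (k θ) > k sin θ`. For monotonicity, the derivative
of `sin (k x) / sin x` has numerator `g x = k cos (k x) sin x - sin (k x) cos x`; since `g 0 = 0` and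
`g' x = (1 - k²) sin (k x) sin x ≥ 0` on `[0, π]`, the numerator is nonnegative there.
-/

open Real Set

lemma mul_sin_lt_sin_mul {k θ : ℝ} (hk0 : 0 < k) (hk1 : k < 1) (hθ : 0 < θ) (hθπ : θ ≤ π) :
    k * sin θ < sin (k * θ) := by
  have h := strictConcaveOn_sin_Icc.2 (left_mem_Icc.2 pi_pos.le) ⟨hθ.le, hθπ⟩ hθ.ne
    (sub_pos.2 hk1) hk0 (sub_add_cancel 1 k)
  simpa only [smul_eq_mul, mul_zero, sin_zero, zero_add] using h

lemma hasDerivAt_mul_cos_mul_mul_sin_sub (k x : ℝ) :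
    HasDerivAt (fun x => k * cos (k * x) * sin x - sin (k * x) * cos x)
      ((1 - k ^ 2) * sin (k * x) * sin x) x := by
  have hkx : HasDerivAt (fun x => k * x) k x := hasDerivAt_const_mul k
  exact (((hkx.cos.const_mul k).mul (hasDerivAt_sin x)).sub
    (hkx.sin.mul (hasDerivAt_cos x))).congr_deriv (by ring)

lemma sin_mul_mul_cos_le {k x : ℝ} (hk0 : 0 ≤ k) (hk1 : k ≤ 1) (hx : 0 ≤ x) (hxπ : x ≤ π) :
    sin (k * x) * cos x ≤ k * cos (k * x) * sin x := by
  have hmono : MonotoneOn (fun x => k * cos (k * x) * sin x - sin (k * x) * cos x) (Icc 0 π) := by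
    refine monotoneOn_of_hasDerivWithinAt_nonneg (convex_Icc 0 π)
      (fun y _ => (hasDerivAt_mul_cos_mul_mul_sin_sub k y).continuousAt.continuousWithinAt)
      (fun y _ => (hasDerivAt_mul_cos_mul_mul_sin_sub k y).hasDerivWithinAt) ?_
    rw [interior_Icc]
    rintro y ⟨hy, hyπ⟩
    have hky : k * y ≤ π := (mul_le_of_le_one_left hy.le hk1).trans hyπ.le
    have hsin_ky := sin_nonneg_of_nonneg_of_le_pi (mul_nonneg hk0 hy.le) hky
    have hsin_y := sin_nonneg_of_nonneg_of_le_pi hy.le hyπ.le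
    have hk_sq : 0 ≤ 1 - k ^ 2 := by nlinarith
    positivity
  have hg := hmono (left_mem_Icc.2 pi_pos.le) ⟨hx, hxπ⟩ hx
  simp only [mul_zero, sin_zero, cos_zero, mul_one, sub_zero] at hg
  linarith

lemma monotoneOn_sin_mul_div_sin {k : ℝ} (hk0 : 0 ≤ k) (hk1 : k ≤ 1) :
    MonotoneOn (fun x => sin (k * x) / sin x) (Ioo 0 π) := by
  have hsin_ne : ∀ x ∈ Ioo 0 π, sin x ≠ 0 := fun x hx => (sin_pos_of_pos_of_lt_pi hx.1 hx.2).ne'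
  have hderiv : ∀ x ∈ Ioo 0 π, HasDerivAt (fun x => sin (k * x) / sin x)
      ((k * cos (k * x) * sin x - sin (k * x) * cos x) / sin x ^ 2) x := by
    intro x hx
    have hkx : HasDerivAt (fun x => k * x) k x := hasDerivAt_const_mul k
    exact (hkx.sin.div (hasDerivAt_sin x) (hsin_ne x hx)).congr_deriv (by ring)
  refine monotoneOn_of_hasDerivWithinAt_nonneg (convex_Ioo 0 π)
    (fun x hx => (hderiv x hx).continuousAt.continuousWithinAt)
    (fun x hx => (hderiv x (interior_subset hx)).hasDerivWithinAt) ?_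
  rw [interior_Ioo]
  rintro x ⟨hx, hxπ⟩
  exact div_nonneg (sub_nonneg.2 (sin_mul_mul_cos_le hk0 hk1 hx.le hxπ.le)) (sq_nonneg _)

theorem sundial_enclosure (k : ℝ) (hk0 : 0 < k) (hk1 : k < 1)
    (θ Θ : ℝ) (hθ : 0 < θ) (hθΘ : θ ≤ Θ) (hΘ : Θ ≤ π / 2) :
    k < Real.sin (k * θ) / Real.sin θ ∧
    Real.sin (k * θ) / Real.sin θ ≤ Real.sin (k * Θ) / Real.sin Θ := by
  have hΘπ : Θ < π := by linarith [pi_pos]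
  have hθπ : θ < π := hθΘ.trans_lt hΘπ
  constructor
  · rw [lt_div_iff₀ (sin_pos_of_pos_of_lt_pi hθ hθπ)]
    exact mul_sin_lt_sin_mul hk0 hk1 hθ hθπ.le
  · exact monotoneOn_sin_mul_div_sin hk0.le hk1.le ⟨hθ, hθπ⟩ ⟨hθ.trans_le hθΘ, hΘπ⟩ hθΘ
end

section
/- Let i₁, i₂, r₁, r₂ be real numbers with 0 < i₁ < i₂ ≤ π/2, 0 < r₁ < i₁, 0 < r₂ < i₂, and suppose sin i₁ / sin r₁ = sin i₂ / sin r₂. Then (i₁ − r₁)/i₁ < (i₂ − r₂)/i₂. -/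
open Real

/-
With `c = r₁ / i₁ < 1`, Snell's law and the decrease of `x ↦ sin x / sin (c x)` on `(0, π)`
(Ibn al-Haytham) give `sin i₂ / sin (c i₂) < sin i₁ / sin r₁ = sin i₂ / sin r₂`, hence
`sin r₂ < sin (c i₂)` and, `sin` being increasing on `[0, π/2]`, `r₂ / i₂ < r₁ / i₁`.
The decrease itself reduces to that of `x ↦ x cot x`, whose derivative has the sign of
`sin x cos x - x = (sin 2x - 2x) / 2 < 0`.
-/

namespace Real

theorem strictAntiOn_mul_cos_div_sin :
    StrictAntiOn (fun x => x * cos x / sin x) (Set.Ioo 0 π) := by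
  refine strictAntiOn_of_deriv_neg (convex_Ioo 0 π) ?_ fun x hx => ?_
  · exact (continuous_id.mul continuous_cos).continuousOn.div continuous_sin.continuousOn
      fun x hx => (sin_pos_of_pos_of_lt_pi hx.1 hx.2).ne'
  rw [interior_Ioo] at hx
  have hsin : 0 < sin x := sin_pos_of_pos_of_lt_pi hx.1 hx.2
  have hderiv : HasDerivAt (fun x => x * cos x / sin x) _ x :=
    ((hasDerivAt_id x).mul (hasDerivAt_cos x)).div (hasDerivAt_sin x) hsin.ne'
  rw [hderiv.deriv]
  have hdouble : sin x * cos x < x := by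
    have := sin_lt (mul_pos two_pos hx.1)
    rw [sin_two_mul] at this
    linarith
  apply div_neg_of_neg_of_pos _ (by positivity)
  simp only [id, Pi.mul_apply]
  linear_combination hdouble - x * sin_sq_add_cos_sq x

theorem sin_mul_mul_cos_lt {c x : ℝ} (hc0 : 0 < c) (hc1 : c < 1) (hx0 : 0 < x) (hxπ : x < π) :
    sin (c * x) * cos x < c * cos (c * x) * sin x := by
  have hcx0 : 0 < c * x := mul_pos hc0 hx0
  have hcx : c * x < x := mul_lt_of_lt_one_left hx0 hc1
  have hanti := strictAntiOn_mul_cos_div_sin ⟨hcx0, hcx.trans hxπ⟩ ⟨hx0, hxπ⟩ hcx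
  simp only at hanti
  rw [div_lt_div_iff₀ (sin_pos_of_pos_of_lt_pi hx0 hxπ)
    (sin_pos_of_pos_of_lt_pi hcx0 (hcx.trans hxπ))] at hanti
  nlinarith

theorem strictAntiOn_sin_div_sin_mul_s9 {c : ℝ} (hc0 : 0 < c) (hc1 : c < 1) :
    StrictAntiOn (fun x => sin x / sin (c * x)) (Set.Ioo 0 π) := by
  have hsin_mul {x : ℝ} (hx : x ∈ Set.Ioo 0 π) : 0 < sin (c * x) :=
    sin_pos_of_pos_of_lt_pi (mul_pos hc0 hx.1) ((mul_lt_of_lt_one_left hx.1 hc1).trans hx.2)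
  refine strictAntiOn_of_deriv_neg (convex_Ioo 0 π) ?_ fun x hx => ?_
  · exact continuous_sin.continuousOn.div
      (continuous_sin.comp (continuous_const_mul c)).continuousOn fun x hx => (hsin_mul hx).ne'
  rw [interior_Ioo] at hx
  have hderiv : HasDerivAt (fun x => sin x / sin (c * x)) _ x := (hasDerivAt_sin x).div
    ((hasDerivAt_sin (c * x)).comp x ((hasDerivAt_id x).const_mul c)) (hsin_mul hx).ne'
  rw [hderiv.deriv]
  apply div_neg_of_neg_of_pos _ (pow_pos (hsin_mul hx) 2)
  simp only [mul_one]
  linarith [sin_mul_mul_cos_lt hc0 hc1 hx.1 hx.2]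

end Real

theorem relative_deviation_increasing (i₁ i₂ r₁ r₂ : ℝ)
    (hi₁ : 0 < i₁) (hi : i₁ < i₂) (hi₂ : i₂ ≤ π / 2)
    (hr₁0 : 0 < r₁) (hr₁ : r₁ < i₁) (hr₂0 : 0 < r₂) (hr₂ : r₂ < i₂)
    (hsnell : Real.sin i₁ / Real.sin r₁ = Real.sin i₂ / Real.sin r₂) :
    (i₁ - r₁) / i₁ < (i₂ - r₂) / i₂ := by
  have hπ := pi_pos
  have hi₂0 : 0 < i₂ := hi₁.trans hi
  set c := r₁ / i₁
  have hc0 : 0 < c := div_pos hr₁0 hi₁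
  have hc1 : c < 1 := (div_lt_one hi₁).mpr hr₁
  have hci₁ : c * i₁ = r₁ := div_mul_cancel₀ r₁ hi₁.ne'
  have hci₂0 : 0 < c * i₂ := mul_pos hc0 hi₂0
  have hci₂ : c * i₂ < i₂ := mul_lt_of_lt_one_left hi₂0 hc1
  have hanti := strictAntiOn_sin_div_sin_mul_s9 hc0 hc1 ⟨hi₁, by linarith⟩ ⟨hi₂0, by linarith⟩ hi
  simp only [hci₁, hsnell] at hanti
  have hsin : sin r₂ < sin (c * i₂) :=
    (div_lt_div_iff_of_pos_left (sin_pos_of_pos_of_lt_pi hi₂0 (by linarith))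
      (sin_pos_of_pos_of_lt_pi hci₂0 (by linarith))
      (sin_pos_of_pos_of_lt_pi hr₂0 (by linarith))).mp hanti
  have hr₂c : r₂ < c * i₂ :=
    (strictMonoOn_sin.lt_iff_lt ⟨by linarith, by linarith⟩ ⟨by linarith, by linarith⟩).mp hsin
  have hratio : r₂ / i₂ < r₁ / i₁ := (div_lt_iff₀ hi₂0).mpr hr₂c
  rw [← one_sub_div hi₁.ne', ← one_sub_div hi₂0.ne']
  linarith
end

section
/- Let c be a real number and let P be a polynomial in two variables over ℝ such that P(sin x, sin(c·x)) = 0 for every real x. Suppose moreover that there exists a real number x₀ such that the one-variable polynomial Y ↦ P(sin x₀, Y) is not the zero polynomial. Then c is rational. -/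
/-!
Fix `x₀` with `Q := P(sin x₀, ·) ≠ 0`. Since `sin` is `2π`-periodic, every `sin (c (x₀ + 2πn))`,
`n ∈ ℤ`, is a root of `Q`, so these values form a finite set. The sine of an angle determines
the angle up to `θ ↦ π - θ`, hence the angles `c (x₀ + 2πn)` modulo `2π` also form a finite set,
and two distinct `m, n` give `c (x₀ + 2πm) ≡ c (x₀ + 2πn) (mod 2π)`, i.e. `c (m - n) ∈ ℤ`.
-/

open Polynomial

namespace Real.Angle

theorem finite_preimage_sin_singleton (y : ℝ) : (sin ⁻¹' {y}).Finite := by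
  rcases (sin ⁻¹' {y}).eq_empty_or_nonempty with h | ⟨θ, hθ⟩
  · simp [h]
  · refine (Set.toFinite {θ, ↑π - θ}).subset fun ψ hψ => ?_
    have hsin : sin θ = sin ψ := hθ.trans hψ.symm
    rcases sin_eq_iff_eq_or_add_eq_pi.mp hsin with h | h
    · exact .inl h.symm
    · exact .inr (eq_sub_of_add_eq' h)

theorem finite_preimage_sin {s : Set ℝ} (hs : s.Finite) : (sin ⁻¹' s).Finite :=
  hs.preimage' fun y _ => finite_preimage_sin_singleton y

end Real.Angle

open Real

theorem exists_rat_eq_of_coe_angle_eq {c x₀ : ℝ} {m n : ℤ} (hmn : m ≠ n)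
    (h : ((c * (x₀ + m * (2 * π)) : ℝ) : Real.Angle) = (c * (x₀ + n * (2 * π)) : ℝ)) :
    ∃ q : ℚ, c = q := by
  obtain ⟨k, hk⟩ := Real.Angle.angle_eq_iff_two_pi_dvd_sub.mp h
  have hmn' : ((m - n : ℤ) : ℝ) ≠ 0 := Int.cast_ne_zero.mpr (sub_ne_zero.mpr hmn)
  refine ⟨k / (m - n : ℤ), ?_⟩
  push_cast at hmn' ⊢
  rw [eq_div_iff hmn']
  have : 2 * π * (c * (m - n)) = 2 * π * k := by linear_combination hk
  exact mul_left_cancel₀ (by positivity) this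

theorem exists_rat_eq_of_finite_sin {c x₀ : ℝ} {s : Set ℝ} (hs : s.Finite)
    (h : ∀ n : ℤ, Real.sin (c * (x₀ + n * (2 * π))) ∈ s) : ∃ q : ℚ, c = q := by
  let angle : ℤ → Real.Angle := fun n => (c * (x₀ + n * (2 * π)) : ℝ)
  have hmaps : Set.MapsTo angle Set.univ (Real.Angle.sin ⁻¹' s) := fun n _ => by
    simpa [angle, Real.Angle.sin_coe] using h n
  obtain ⟨m, -, n, -, hmn, heq⟩ :=
    Set.infinite_univ.exists_ne_map_eq_of_mapsTo hmaps (Real.Angle.finite_preimage_sin hs)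
  exact exists_rat_eq_of_coe_angle_eq hmn heq

theorem algebraic_relation_implies_rational (c : ℝ) (P : Polynomial (Polynomial ℝ))
    (hP : ∀ x : ℝ, (P.map (Polynomial.evalRingHom (Real.sin x))).eval (Real.sin (c * x)) = 0)
    (hne : ∃ x₀ : ℝ, P.map (Polynomial.evalRingHom (Real.sin x₀)) ≠ 0) :
    ∃ q : ℚ, c = (q : ℝ) := by
  obtain ⟨x₀, hQ⟩ := hne
  refine exists_rat_eq_of_finite_sin (x₀ := x₀) (finite_setOfPred_isRoot hQ) fun n => ?_
  have hroot := hP (x₀ + n * (2 * π))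
  rwa [Real.sin_add_int_mul_two_pi] at hroot
end

section
/- For every real number c with 0 < c < 1 and every real y with 0 < y ≤ π/2, one has sin(y/2)/sin(c·y/2) > sin y / sin(c·y). -/
open Real

theorem sin_two_mul_div_sin_two_mul_lt_sin_div_sin {a b : ℝ} (ha : 0 < a) (hab : a < b)
    (ha' : a < π / 2) (hb : b < π) :
    sin (2 * b) / sin (2 * a) < sin b / sin a := by
  have hsin_a : 0 < sin a := sin_pos_of_pos_of_lt_pi ha (by linarith)
  have hsin_b : 0 < sin b := sin_pos_of_pos_of_lt_pi (by linarith) hb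
  have hcos_a : 0 < cos a := cos_pos_of_mem_Ioo ⟨by linarith, ha'⟩
  have hcos_lt : cos b < cos a := cos_lt_cos_of_nonneg_of_le_pi ha.le hb.le hab
  calc sin (2 * b) / sin (2 * a) = sin b / sin a * (cos b / cos a) := by
        rw [sin_two_mul, sin_two_mul]
        field_simp
    _ < sin b / sin a := mul_lt_of_lt_one_right (div_pos hsin_b hsin_a)
        ((div_lt_one hcos_a).mpr hcos_lt)

theorem halving_inequality (c : ℝ) (hc0 : 0 < c) (hc1 : c < 1)
    (y : ℝ) (hy0 : 0 < y) (hy : y ≤ π / 2) :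
    Real.sin (y / 2) / Real.sin (c * y / 2) > Real.sin y / Real.sin (c * y) := by
  have key := sin_two_mul_div_sin_two_mul_lt_sin_div_sin (a := c * y / 2) (b := y / 2)
    (by positivity) (by nlinarith) (by nlinarith) (by linarith [pi_pos])
  rwa [mul_div_cancel₀ _ two_ne_zero, mul_div_cancel₀ _ two_ne_zero] at key
end

section
/- Let c be a real number with 0 < c < 1, let x, y be real with 0 < x < y < π/2, and let z ∈ (0, π/2) satisfy sin y / sin(c·y) = sin x / sin z. Then x − z < (1 − c)·y. -/
open Real

/-! With `w = x - (1 - c) y`, the product-to-sum formulas give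
`sin x · sin (c y) - sin w · sin y = sin (y - x) · sin ((1 - c) y) > 0`, and the defining relation
of `z` turns `sin x · sin (c y)` into `sin z · sin y`. Hence `sin w < sin z`, so `w < z` because both
lie in `[-π/2, π/2]`, where `sin` is strictly increasing. -/

theorem Real.sin_mul_sin_sub_sin_sub_mul_sin_add (a b d : ℝ) :
    sin a * sin b - sin (a - d) * sin (b + d) = sin (b + d - a) * sin d := by
  simp only [sin_sub, sin_add, cos_add]
  linear_combination -(sin a * sin b) * sin_sq_add_cos_sq d

theorem Real.sin_sub_mul_sin_add_lt_sin_mul_sin {a b d : ℝ} (hab : a < b + d)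
    (hba : b + d - a < π) (hd0 : 0 < d) (hd : d < π) :
    sin (a - d) * sin (b + d) < sin a * sin b := by
  have hpos : 0 < sin (b + d - a) * sin d :=
    mul_pos (sin_pos_of_pos_of_lt_pi (by linarith) hba) (sin_pos_of_pos_of_lt_pi hd0 hd)
  linarith [sin_mul_sin_sub_sin_sub_mul_sin_add a b d]

theorem intermediate_bound (c : ℝ) (hc0 : 0 < c) (hc1 : c < 1)
    (x y z : ℝ) (hx : 0 < x) (hxy : x < y) (hy : y < π / 2)
    (hz0 : 0 < z) (hz : z < π / 2)
    (hdef : Real.sin y / Real.sin (c * y) = Real.sin x / Real.sin z) :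
    x - z < (1 - c) * y := by
  have hy0 : 0 < y := hx.trans hxy
  have hcy : c * y < y := by nlinarith
  have hdy : (1 - c) * y < y := by nlinarith
  have hsin_y : 0 < sin y := sin_pos_of_pos_of_lt_pi hy0 (by linarith)
  have hsin_cy : 0 < sin (c * y) := sin_pos_of_pos_of_lt_pi (by positivity) (by linarith)
  have hsin_z : 0 < sin z := sin_pos_of_pos_of_lt_pi hz0 (by linarith)
  have hrel : sin x * sin (c * y) = sin z * sin y := by
    rw [div_eq_div_iff hsin_cy.ne' hsin_z.ne'] at hdef
    linarith
  have hlt : sin (x - (1 - c) * y) * sin y < sin z * sin y := by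
    have hprod := sin_sub_mul_sin_add_lt_sin_mul_sin (a := x) (b := c * y) (d := (1 - c) * y)
      (by linarith) (by linarith) (by nlinarith) (by linarith)
    rwa [show c * y + (1 - c) * y = y by ring, hrel] at hprod
  have hsin_lt : sin (x - (1 - c) * y) < sin z := lt_of_mul_lt_mul_right hlt hsin_y.le
  have hw : x - (1 - c) * y ∈ Set.Icc (-(π / 2)) (π / 2) := ⟨by linarith, by linarith⟩
  have hw_lt : x - (1 - c) * y < z :=
    (strictMonoOn_sin.lt_iff_lt hw ⟨by linarith, hz.le⟩).mp hsin_lt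
  linarith
end

section
/- Let c be a real number with 0 < c < 1, let x, y be real with 0 < x < y < π/2, and let z ∈ (0, π/2) satisfy sin y / sin(c·y) = sin x / sin z. Then sin(x − z)/sin((1 − c)·y) < 1 − sin(c·y − z)/sin(c·y). -/
/-!
Put `a = c y` and `b = (1 - c) y`. Expanding `sin (x - z)` and `sin (a - z)`, the claim reads
`cos z * A < M` with `M = sin a sin b + sin z (sin b cos a + sin a cos x) > 0` and
`A = sin a (sin x + sin b)`. The hypothesis says `sin y sin z = sin x sin a`, so `sin z > 0`
and, after multiplying by `sin² y`, both `sin z` and `cos² z = 1 - sin² z` can be eliminated from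
`M² - cos² z A²`, which then factors as `2 sin x sin³ a sin b sin (y - x) (1 - cos (x + b))`,
a positive number.
-/

open Real

lemma sin_mul_cos_sub_sub_sin_mul_cos_sub (x y u : ℝ) :
    sin x * cos (y - u) - sin y * cos (u - x) = -(sin (y - x) * cos u) := by
  simp only [sin_sub, cos_sub]
  ring

lemma sin_add_mul_cos_sub_add_sin_mul_cos_sub (a b x : ℝ) :
    sin (a + b) * (cos x - cos b) + sin x * (cos (a - x) - cos (a + b)) =
      sin (a + b - x) * (1 - cos (x + b)) := by
  have h := sin_mul_cos_sub_sub_sin_mul_cos_sub x (a + b) (x + b)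
  rw [show a + b - (x + b) = a - x by ring, show x + b - x = b by ring] at h
  linear_combination h + (sin_sub (a + b) x).symm

lemma sin_add_sq_mul_sq_sub_sq_of_sin_mul_sin_eq {a b x z : ℝ}
    (h : sin (a + b) * sin z = sin x * sin a) :
    sin (a + b) ^ 2 * ((sin a * sin b + sin z * (sin b * cos a + sin a * cos x)) ^ 2 -
        (cos z * (sin a * (sin x + sin b))) ^ 2) =
      2 * sin x * sin a ^ 3 * sin b * sin (a + b - x) * (1 - cos (x + b)) := by
  set Q := sin b * cos a + sin a * cos x
  have hQ : Q ^ 2 + sin a ^ 2 * (sin x + sin b) ^ 2 =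
      sin a ^ 2 + sin b ^ 2 + 2 * sin a * sin b * cos (a - x) := by
    rw [cos_sub]
    linear_combination sin b ^ 2 * sin_sq_add_cos_sq a + sin a ^ 2 * sin_sq_add_cos_sq x
  have hQ_sub : Q - sin (a + b) = sin a * (cos x - cos b) := by
    rw [sin_add]
    ring
  have hsq : sin a ^ 2 + sin b ^ 2 - sin (a + b) ^ 2 = -(2 * sin a * sin b * cos (a + b)) := by
    rw [sin_add, cos_add]
    linear_combination (-sin a ^ 2) * sin_sq_add_cos_sq b + (-sin b ^ 2) * sin_sq_add_cos_sq a
  -- the identity with `z` already eliminated, divided by `sin x * sin a ^ 2`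
  have hz_free : sin (a + b) ^ 2 * (-sin x - 2 * sin b) + 2 * sin (a + b) * sin b * Q +
      sin x * (Q ^ 2 + sin a ^ 2 * (sin x + sin b) ^ 2) =
        2 * sin a * sin b * (sin (a + b - x) * (1 - cos (x + b))) := by
    linear_combination sin x * hQ + 2 * sin (a + b) * sin b * hQ_sub + sin x * hsq +
      2 * sin a * sin b * sin_add_mul_cos_sub_add_sin_mul_cos_sub a b x
  linear_combination (2 * sin (a + b) * sin a * sin b * Q +
      (Q ^ 2 + (sin a * (sin x + sin b)) ^ 2) * (sin (a + b) * sin z + sin x * sin a)) * h -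
    sin (a + b) ^ 2 * (sin a * (sin x + sin b)) ^ 2 * sin_sq_add_cos_sq z +
    sin a ^ 2 * sin x * hz_free

theorem key_estimate_general (c : ℝ) (hc0 : 0 < c) (hc1 : c < 1)
    (x y z : ℝ) (hx : 0 < x) (hxy : x < y) (hy : y < π / 2)
    (hdef : Real.sin y / Real.sin (c * y) = Real.sin x / Real.sin z) :
    Real.sin (x - z) / Real.sin ((1 - c) * y) < 1 - Real.sin (c * y - z) / Real.sin (c * y) := by
  set a := c * y
  set b := (1 - c) * y
  have hab : a + b = y := by ring
  have ha : 0 < a := mul_pos hc0 (hx.trans hxy)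
  have hb : 0 < b := mul_pos (sub_pos.2 hc1) (hx.trans hxy)
  have hsx : 0 < sin x := sin_pos_of_pos_of_lt_pi hx (by linarith)
  have hsy : 0 < sin y := sin_pos_of_pos_of_lt_pi (hx.trans hxy) (by linarith)
  have hsa : 0 < sin a := sin_pos_of_pos_of_lt_pi ha (by linarith)
  have hsb : 0 < sin b := sin_pos_of_pos_of_lt_pi hb (by linarith)
  have hcx : 0 < cos x := cos_pos_of_mem_Ioo ⟨by linarith, by linarith⟩
  have hca : 0 < cos a := cos_pos_of_mem_Ioo ⟨by linarith, by linarith⟩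
  -- `x / 0 = 0` would make the right side of `hdef` vanish
  have hsz_ne : sin z ≠ 0 := by
    rintro h
    rw [h, div_zero] at hdef
    exact (div_pos hsy hsa).ne' hdef
  have hrel : sin y * sin z = sin x * sin a := (div_eq_div_iff hsa.ne' hsz_ne).1 hdef
  have hsz : 0 < sin z := pos_of_mul_pos_right (hrel ▸ mul_pos hsx hsa) hsy.le
  set M := sin a * sin b + sin z * (sin b * cos a + sin a * cos x)
  set A := sin a * (sin x + sin b)
  have hM : 0 < M :=
    add_pos (mul_pos hsa hsb) (mul_pos hsz (add_pos (mul_pos hsb hca) (mul_pos hsa hcx)))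
  have hsq : (cos z * A) ^ 2 < M ^ 2 := by
    have hid := sin_add_sq_mul_sq_sub_sq_of_sin_mul_sin_eq (hab ▸ hrel)
    rw [hab] at hid
    have hsyx : 0 < sin (y - x) := sin_pos_of_pos_of_lt_pi (by linarith) (by linarith)
    have hcos : 0 < 1 - cos (x + b) := sub_pos.2 <| by
      simpa using cos_lt_cos_of_nonneg_of_le_pi le_rfl (by linarith) (by linarith : 0 < x + b)
    have hpos : 0 < sin y ^ 2 * (M ^ 2 - (cos z * A) ^ 2) := by
      rw [hid]
      positivity
    exact sub_pos.1 (pos_of_mul_pos_right hpos (sq_nonneg _))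
  have hlt : cos z * A < M := (le_abs_self _).trans_lt (abs_lt_of_sq_lt_sq hsq hM.le)
  have hgoal :
      1 - sin (a - z) / sin a - sin (x - z) / sin b = (M - cos z * A) / (sin a * sin b) := by
    rw [sin_sub, sin_sub]
    field_simp
    ring
  linarith [div_pos (sub_pos.2 hlt) (mul_pos hsa hsb)]

theorem key_estimate (c : ℝ) (hc0 : 0 < c) (hc1 : c < 1)
    (x y z : ℝ) (hx : 0 < x) (hxy : x < y) (hy : y < π / 2)
    (hz0 : 0 < z) (hz : z < π / 2)
    (hdef : Real.sin y / Real.sin (c * y) = Real.sin x / Real.sin z) :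
    Real.sin (x - z) / Real.sin ((1 - c) * y) < 1 - Real.sin (c * y - z) / Real.sin (c * y) :=
  key_estimate_general c hc0 hc1 x y z hx hxy hy hdef
end

section
/- Let i, r be real numbers with 0 < r < i ≤ π/2 and sin i = (3/2)·sin r. Then 4·r < 3·i; equivalently, setting d = i − r, one has i − 2d < 2d. -/
open Real

/-! If `4r ≥ 3i`, then monotonicity of `sin` on `[-π/2, π/2]` and strict concavity of `sin` on
`[0, π]` (with `sin 0 = 0`) give `sin r ≥ sin (3i/4) > (3/4) sin i = (9/8) sin r`, which is absurd
since `sin r > 0`. -/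

theorem mul_sin_lt_sin_mul_s17 {t x : ℝ} (ht0 : 0 < t) (ht1 : t < 1) (hx0 : 0 < x) (hxπ : x ≤ π) :
    t * sin x < sin (t * x) := by
  have h := strictConcaveOn_sin_Icc.2 (Set.left_mem_Icc.2 pi_pos.le) ⟨hx0.le, hxπ⟩ hx0.ne
    (sub_pos.2 ht1) ht0 (sub_add_cancel 1 t)
  simpa only [smul_eq_mul, sin_zero, mul_zero, zero_add] using h

theorem lt_mul_of_sin_eq_mul_sin {n t i r : ℝ} (ht0 : 0 < t) (ht1 : t < 1) (htn : 1 ≤ t * n)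
    (hri : r < i) (hi : i ≤ π / 2) (hsnell : sin i = n * sin r) :
    r < t * i := by
  by_contra! hr
  have hi0 : 0 < i := by nlinarith
  have hti : 0 < t * i := mul_pos ht0 hi0
  have hsin_r : 0 < sin r := sin_pos_of_pos_of_lt_pi (by linarith) (by linarith [pi_pos])
  have hmono : sin (t * i) ≤ sin r :=
    strictMonoOn_sin.monotoneOn ⟨by linarith [pi_pos], by nlinarith⟩ ⟨by linarith [pi_pos],
      by linarith⟩ hr
  have hconc := mul_sin_lt_sin_mul_s17 ht0 ht1 hi0 (by linarith [pi_pos])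
  rw [hsnell, ← mul_assoc] at hconc
  linarith [le_mul_of_one_le_left hsin_r.le htn]

theorem deviation_second_inequality_general (i r : ℝ)
    (hri : r < i) (hi : i ≤ π / 2)
    (hsnell : Real.sin i = (3 / 2) * Real.sin r) :
    4 * r < 3 * i := by
  have := lt_mul_of_sin_eq_mul_sin (t := 3 / 4) (by norm_num) (by norm_num) (by norm_num) hri hi
    hsnell
  linarith

theorem deviation_second_inequality (i r : ℝ)
    (hr0 : 0 < r) (hri : r < i) (hi : i ≤ π / 2)
    (hsnell : Real.sin i = (3 / 2) * Real.sin r) :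
    4 * r < 3 * i :=
  deviation_second_inequality_general i r hri hi hsnell
end

section
/- Let i, r be real numbers with 0 < r < i ≤ π/2 and sin i = (3/2)·sin r. Then i < 2·r if and only if cos(i/2) > 3/4; equivalently, setting d = i − r, the inequality 0 < i − 2d holds exactly when i/2 < arccos(3/4). -/
/-!
Writing sin i = 2 sin(i/2) cos(i/2), Snell's law with index n gives
sin r = (2/n) sin(i/2) cos(i/2). Since sine is strictly increasing on [-π/2, π/2],
i/2 < r is equivalent to sin(i/2) < sin r, i.e. (after cancelling sin(i/2) > 0) to n/2 < cos(i/2).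
-/

open Real Set

theorem lt_two_mul_iff_sin_half_lt_sin {i r : ℝ} (hi : i ∈ Icc (-π) π)
    (hr : r ∈ Icc (-(π / 2)) (π / 2)) : i < 2 * r ↔ sin (i / 2) < sin r := by
  have hi_half : i / 2 ∈ Icc (-(π / 2)) (π / 2) := ⟨by linarith [hi.1], by linarith [hi.2]⟩
  rw [strictMonoOn_sin.lt_iff_lt hi_half hr]
  constructor <;> intro h <;> linarith

theorem sin_half_lt_sin_iff_of_sin_eq_mul_sin {i r n : ℝ} (hn : 0 < n)
    (hsnell : sin i = n * sin r) (hsin_half : 0 < sin (i / 2)) :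
    sin (i / 2) < sin r ↔ n / 2 < cos (i / 2) := by
  have hsin_r : n * sin r = sin (i / 2) * (2 * cos (i / 2)) := by
    rw [← hsnell, ← mul_left_comm, ← mul_assoc, ← sin_two_mul, mul_div_cancel₀ i two_ne_zero]
  rw [← mul_lt_mul_iff_right₀ hn, hsin_r, mul_comm n, mul_lt_mul_iff_right₀ hsin_half]
  constructor <;> intro h <;> linarith

theorem lt_two_mul_iff_cos_half_gt_of_snell {i r n : ℝ} (hn : 0 < n)
    (hi : i ∈ Ioc 0 π) (hr : r ∈ Icc (-(π / 2)) (π / 2)) (hsnell : sin i = n * sin r) :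
    i < 2 * r ↔ n / 2 < cos (i / 2) := by
  have hsin_half : 0 < sin (i / 2) :=
    sin_pos_of_pos_of_lt_pi (by linarith [hi.1]) (by linarith [hi.2, pi_pos])
  rw [lt_two_mul_iff_sin_half_lt_sin ⟨by linarith [hi.1, pi_pos], hi.2⟩ hr,
    sin_half_lt_sin_iff_of_sin_eq_mul_sin hn hsnell hsin_half]

theorem deviation_first_inequality (i r : ℝ)
    (hr0 : 0 < r) (hri : r < i) (hi : i ≤ π / 2)
    (hsnell : Real.sin i = (3 / 2) * Real.sin r) :
    i < 2 * r ↔ Real.cos (i / 2) > 3 / 4 := by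
  have hi_mem : i ∈ Ioc 0 π := ⟨hr0.trans hri, by linarith [pi_pos]⟩
  have hr_mem : r ∈ Icc (-(π / 2)) (π / 2) := ⟨by linarith [pi_pos], by linarith⟩
  rw [lt_two_mul_iff_cos_half_gt_of_snell (by norm_num) hi_mem hr_mem hsnell]
  norm_num
end
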